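/- (Circumscribed ball of the structured trust region.) Assume q ≥ 1 and that every coordinate index j ∈ {1,…,n} belongs to at least one element index set 𝓘_i. Then 𝒮(Δ) is contained in the closed Euclidean ball of radius √(min{n,q})·max_{1≤i≤q} Δ_i centered at the origin: every s ∈ ℝⁿ with ‖s^{𝓘_i}‖₂ ≤ Δ_i for all i satisfies ‖s‖₂ ≤ √(min{n,q})·max_{1≤i≤q} Δ_i. -/

import Mathlib

/-!
Every coordinate `j` lies in some `𝓘ᵢ`, so `s_j² ≤ ‖s^{𝓘ᵢ}‖² ≤ Δᵢ²`; summing over the `n`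
coordinates gives `‖s‖² ≤ n · max Δᵢ²`. Alternatively, assigning each coordinate to one set
covering it splits `‖s‖²` into `q` partial sums, each bounded by some `Δᵢ²`, so
`‖s‖² ≤ q · max Δᵢ²`.
-/

/-- Coordinate projection: `(proj I x) j = x j` if `j ∈ I`, else `0`. -/
noncomputable def proj {n : ℕ} (I : Finset (Fin n)) (x : EuclideanSpace ℝ (Fin n)) :
    EuclideanSpace ℝ (Fin n) :=
  WithLp.toLp 2 (fun j => if j ∈ I then x j else 0)

open Finset

theorem norm_proj_sq {n : ℕ} (I : Finset (Fin n)) (x : EuclideanSpace ℝ (Fin n)) :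
    ‖proj I x‖ ^ 2 = ∑ j ∈ I, x j ^ 2 := by
  simp [EuclideanSpace.norm_sq_eq, proj, apply_ite, sum_ite_mem]

section Cover

variable {ι κ : Type*} (I : ι → Finset κ)
  (hcover : ∀ j, ∃ i, j ∈ I i) {a : κ → ℝ} (ha : ∀ j, 0 ≤ a j) {c : ℝ}
  (hc : ∀ i, ∑ j ∈ I i, a j ≤ c)

include hcover ha hc

theorem le_of_forall_sum_le_of_cover (j : κ) : a j ≤ c := by
  obtain ⟨i, hi⟩ := hcover j
  exact (single_le_sum (fun j _ => ha j) hi).trans (hc i)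

variable [Fintype κ]

theorem sum_le_card_mul_of_cover : ∑ j, a j ≤ Fintype.card κ * c := by
  simpa using sum_le_sum fun j (_ : j ∈ univ) => le_of_forall_sum_le_of_cover I hcover ha hc j

variable [Fintype ι]

theorem sum_le_card_index_mul_of_cover : ∑ j, a j ≤ Fintype.card ι * c := by
  classical
  choose f hf using hcover
  calc ∑ j, a j = ∑ i, ∑ j with f j = i, a j := (sum_fiberwise _ f _).symm
    _ ≤ ∑ i, ∑ j ∈ I i, a j := by
        refine sum_le_sum fun i _ => sum_le_sum_of_subset_of_nonneg ?_ fun j _ _ => ha j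
        intro j hj
        exact (mem_filter.mp hj).2 ▸ hf j
    _ ≤ ∑ _i : ι, c := sum_le_sum fun i _ => hc i
    _ = Fintype.card ι * c := by simp

theorem sum_le_min_card_mul_of_cover :
    ∑ j, a j ≤ min (Fintype.card κ : ℝ) (Fintype.card ι) * c := by
  rcases le_total (Fintype.card κ : ℝ) (Fintype.card ι) with h | h
  · rw [min_eq_left h]; exact sum_le_card_mul_of_cover I hcover ha hc
  · rw [min_eq_right h]; exact sum_le_card_index_mul_of_cover I hcover ha hc

end Cover

theorem subset_circumscribed_ball_general {n q : ℕ} (hq : 0 < q)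
    (I : Fin q → Finset (Fin n)) (Δ : Fin q → ℝ)
    (hcover : ∀ j : Fin n, ∃ i, j ∈ I i)
    (s : EuclideanSpace ℝ (Fin n)) (hs : ∀ i, ‖proj (I i) s‖ ≤ Δ i) :
    ‖s‖ ≤ Real.sqrt (min (n : ℝ) (q : ℝ)) *
      Finset.univ.sup' (Finset.univ_nonempty_iff.mpr ⟨⟨0, hq⟩⟩) Δ := by
  set M := Finset.univ.sup' (Finset.univ_nonempty_iff.mpr ⟨⟨0, hq⟩⟩) Δ
  have hM : ∀ i, ‖proj (I i) s‖ ≤ M := fun i => (hs i).trans (le_sup' Δ (mem_univ i))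
  have hM0 : 0 ≤ M := (norm_nonneg _).trans (hM ⟨0, hq⟩)
  have hsq : ∑ j, s j ^ 2 ≤ min (n : ℝ) q * M ^ 2 := by
    simpa using sum_le_min_card_mul_of_cover I hcover (fun j => sq_nonneg (s j))
      fun i => (norm_proj_sq (I i) s).symm.le.trans (pow_le_pow_left₀ (norm_nonneg _) (hM i) 2)
  rw [← Real.sqrt_sq hM0, ← Real.sqrt_mul (by positivity),
    Real.le_sqrt (norm_nonneg _) (by positivity)]
  simpa [EuclideanSpace.norm_sq_eq] using hsq

/-- Circumscribed ball: if every coordinate belongs to some element index set, the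
structured trust region `𝒮(Δ)` is contained in the closed Euclidean ball of
radius `√(min{n,q})·max_i Δ_i` centered at the origin. -/
theorem subset_circumscribed_ball {n q : ℕ} (hq : 0 < q)
    (I : Fin q → Finset (Fin n)) (Δ : Fin q → ℝ) (hΔ : ∀ i, 0 < Δ i)
    (hcover : ∀ j : Fin n, ∃ i, j ∈ I i)
    (s : EuclideanSpace ℝ (Fin n)) (hs : ∀ i, ‖proj (I i) s‖ ≤ Δ i) :
    ‖s‖ ≤ Real.sqrt (min (n : ℝ) (q : ℝ)) *
      Finset.univ.sup' (Finset.univ_nonempty_iff.mpr ⟨⟨0, hq⟩⟩) Δ :=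
  subset_circumscribed_ball_general hq I Δ hcover s hs
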